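/- Let R = (V, ≤, ρ) be the ordered binary structure with V = ℕ × {0,1}, with (n,i) ≤ (m,j) if and only if n < m or (n = m and i ≤ j), and with ρ((n,i),(m,j)) if and only if n = m and i ≤ j (the ordered reflexive directed graph isomorphic to the lexicographic product 2·Δ_ℕ of the two-element chain by an infinite antichain). Then the profile of R satisfies φ_R(0) = φ_R(1) = 1 and φ_R(r) = φ_R(r−1) + φ_R(r−2) for every r ≥ 2; in particular φ_R grows as the Fibonacci sequence. -/
import Mathlib


/-- An ordered binary structure: a domain `V`, a linear order `le` on `V`,
and a family of binary relations `rel i` on `V` indexed by `ι`. -/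
structure OrdBin (ι : Type) where
  V : Type
  le : V → V → Prop
  linear : IsLinearOrder V le
  rel : ι → V → V → Prop

namespace OrdBin

variable {ι : Type}

/-- The substructure induced on a subset `A` of the domain. -/
def restrict (R : OrdBin ι) (A : Set R.V) : OrdBin ι where
  V := A
  le := fun a b => R.le a.1 b.1
  linear := by
    haveI := R.linear
    exact
      { refl := fun a => refl_of R.le a.1
        trans := fun a b c hab hbc => trans_of R.le hab hbc
        antisymm := fun a b hab hba => Subtype.ext (antisymm_of R.le hab hba)
        total := fun a b => total_of R.le a.1 b.1 }
  rel := fun i a b => R.rel i a.1 b.1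

/-- Isomorphism of ordered binary structures: a bijection of the domains preserving
the linear order and each binary relation. -/
def Iso (R S : OrdBin ι) : Prop :=
  ∃ e : R.V ≃ S.V, (∀ x y : R.V, R.le x y ↔ S.le (e x) (e y)) ∧
    ∀ (i : ι) (x y : R.V), R.rel i x y ↔ S.rel i (e x) (e y)

/-- `R` embeds in `S` if `R` is isomorphic to an induced substructure of `S`. -/
def Embeds (R S : OrdBin ι) : Prop :=
  ∃ A : Set S.V, Iso R (S.restrict A)

/-- `B` is a monomorphic part of `R`: any two finite subsets of the domain of the
same cardinality which agree outside `B` induce isomorphic substructures. -/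
def MonoPart (R : OrdBin ι) (B : Set R.V) : Prop :=
  ∀ A A' : Set R.V, A.Finite → A'.Finite → A.ncard = A'.ncard →
    A \ B = A' \ B → Iso (R.restrict A) (R.restrict A')

/-- A monomorphic decomposition of `R`: a partition of the domain into monomorphic parts. -/
def MonoDecomp (R : OrdBin ι) (P : Set (Set R.V)) : Prop :=
  Setoid.IsPartition P ∧ ∀ B ∈ P, R.MonoPart B

/-- `R` has a monomorphic decomposition with finitely many blocks. -/
def HasFiniteMonoDecomp (R : OrdBin ι) : Prop :=
  ∃ P : Set (Set R.V), R.MonoDecomp P ∧ P.Finite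

/-- A hereditary class of finite ordered binary structures. -/
def Hereditary (C : Set (OrdBin ι)) : Prop :=
  (∀ R ∈ C, Finite R.V) ∧ ∀ R ∈ C, ∀ S : OrdBin ι, Embeds S R → S ∈ C

/-- `x` and `y` are `F`-equivalent: the substructures induced on `{x} ∪ F` and
`{y} ∪ F` are isomorphic. -/
def EqF (R : OrdBin ι) (F : Set R.V) (x y : R.V) : Prop :=
  Iso (R.restrict (insert x F)) (R.restrict (insert y F))

/-- `x ≃_{m,R} y`: `x` and `y` are `F`-equivalent for every `m`-element subset `F`
of `V \ {x, y}`. -/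
def EqM (R : OrdBin ι) (m : ℕ) (x y : R.V) : Prop :=
  ∀ F : Set R.V, F.Finite → F.ncard = m → x ∉ F → y ∉ F → EqF R F x y

/-- `x ≃_{≤m,R} y`: `x ≃_{m',R} y` for every `m' ≤ m`. -/
def EqLe (R : OrdBin ι) (m : ℕ) (x y : R.V) : Prop :=
  ∀ m' ≤ m, EqM R m' x y

/-- `x ≃_R y`: `x ≃_{m,R} y` for every `m`. -/
def EqR (R : OrdBin ι) (x y : R.V) : Prop :=
  ∀ m : ℕ, EqM R m x y

/-- `d(x,y) = d(x',y')`: the pair of truth values `(ρ_i(x,y), ρ_i(y,x))` agrees with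
`(ρ_i(x',y'), ρ_i(y',x'))` for every `i`. -/
def dEq (R : OrdBin ι) (x y x' y' : R.V) : Prop :=
  ∀ i : ι, (R.rel i x y ↔ R.rel i x' y') ∧ (R.rel i y x ↔ R.rel i y' x')

/-- `A` is an interval of the linear order `(V, le)`. -/
def IntervalLe (R : OrdBin ι) (A : Set R.V) : Prop :=
  ∀ u ∈ A, ∀ w ∈ A, ∀ z : R.V, R.le u z → R.le z w → z ∈ A

/-- `A` is an interval of `R`: an interval of the order such that all elements of `A`
have the same relations to each element outside `A`. -/
def IntervalR (R : OrdBin ι) (A : Set R.V) : Prop :=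
  IntervalLe R A ∧ ∀ u ∈ A, ∀ u' ∈ A, ∀ w ∉ A, dEq R u w u' w

/-- `R` is `n`-monomorphic: the substructures induced on any two `n`-element subsets
of the domain are isomorphic. -/
def NMono (R : OrdBin ι) (n : ℕ) : Prop :=
  ∀ A A' : Set R.V, A.Finite → A'.Finite → A.ncard = n → A'.ncard = n →
    Iso (R.restrict A) (R.restrict A')

/-- `R` is `(≤n)`-monomorphic. -/
def LeMono (R : OrdBin ι) (n : ℕ) : Prop :=
  ∀ m ≤ n, NMono R m

/-- `R` is monomorphic. -/
def Mono (R : OrdBin ι) : Prop :=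
  ∀ n : ℕ, NMono R n

/-- The profile of `R`: the number of induced substructures on `n`-element subsets
of the domain, counted up to isomorphism. -/
noncomputable def profileR (R : OrdBin ι) (n : ℕ) : ℕ :=
  Nat.card (Quot fun (A B : {A : Set R.V // A.Finite ∧ A.ncard = n}) =>
    Iso (R.restrict A.1) (R.restrict B.1))

/-- The profile of a class `C`: the number of members of `C` with exactly `n`
elements, counted up to isomorphism. -/
noncomputable def profileC (C : Set (OrdBin ι)) (n : ℕ) : ℕ :=
  Nat.card (Quot fun (R S : {R : OrdBin ι // R ∈ C ∧ Nat.card R.V = n}) =>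
    Iso R.1 S.1)

end OrdBin

/-- The Fibonacci sequence with `F 0 = F 1 = 1`. -/
def fib1 : ℕ → ℕ
  | 0 => 1
  | 1 => 1
  | n + 2 => fib1 (n + 1) + fib1 n

/-- The lexicographic-type linear order on `ℕ × Fin 2`:
`(n,i) ≤ (m,j)` iff `n < m` or (`n = m` and `i ≤ j`). -/
abbrev lexLe (p q : ℕ × Fin 2) : Prop :=
  p.1 < q.1 ∨ (p.1 = q.1 ∧ p.2 ≤ q.2)

theorem lexLe_isLinearOrder : IsLinearOrder (ℕ × Fin 2) lexLe where
  refl := fun p => Or.inr ⟨rfl, le_refl _⟩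
  trans := by
    rintro ⟨a, i⟩ ⟨b, j⟩ ⟨c, k⟩ (h | ⟨rfl, h'⟩) (g | ⟨rfl, g'⟩)
    · exact Or.inl (h.trans g)
    · exact Or.inl h
    · exact Or.inl g
    · exact Or.inr ⟨rfl, le_trans h' g'⟩
  antisymm := by
    rintro ⟨a, i⟩ ⟨b, j⟩ (h | ⟨rfl, h'⟩) (g | ⟨g0, g'⟩)
    · exact absurd (h.trans g) (lt_irrefl a)
    · subst g0; exact absurd h (lt_irrefl _)
    · exact absurd g (lt_irrefl a)
    · exact congrArg (Prod.mk a) (le_antisymm h' g')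
  total := by
    rintro ⟨a, i⟩ ⟨b, j⟩
    rcases lt_trichotomy a b with h | rfl | h
    · exact Or.inl (Or.inl h)
    · rcases le_total i j with h' | h'
      · exact Or.inl (Or.inr ⟨rfl, h'⟩)
      · exact Or.inr (Or.inr ⟨rfl, h'⟩)
    · exact Or.inr (Or.inl h)

/-- The ordered reflexive directed graph `(ℕ × {0,1}, ≤, ρ)` with
`(n,i) ≤ (m,j)` iff `n < m ∨ (n = m ∧ i ≤ j)`, and `ρ((n,i),(m,j))` iff
`n = m ∧ i ≤ j`; it is isomorphic to the lexicographic product `2·Δ_ℕ`. -/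
def twoDotAntichain : OrdBin (Fin 1) where
  V := ℕ × Fin 2
  le := lexLe
  linear := lexLe_isLinearOrder
  rel := fun _ p q => p.1 = q.1 ∧ p.2 ≤ q.2

namespace OrdBin

variable {ι : Type}

-- new material
lemma Iso.refl (R : OrdBin ι) : Iso R R :=
  ⟨Equiv.refl _, fun _ _ => Iff.rfl, fun _ _ _ => Iff.rfl⟩

lemma Iso.symm {R S : OrdBin ι} (h : Iso R S) : Iso S R := by
  obtain ⟨e, hle, hrel⟩ := h
  refine ⟨e.symm, fun x y => ?_, fun i x y => ?_⟩
  · rw [hle (e.symm x) (e.symm y), e.apply_symm_apply, e.apply_symm_apply]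
  · rw [hrel i (e.symm x) (e.symm y), e.apply_symm_apply, e.apply_symm_apply]

lemma Iso.trans {R S T : OrdBin ι} (h : Iso R S) (h' : Iso S T) : Iso R T := by
  obtain ⟨e, hle, hrel⟩ := h
  obtain ⟨f, hle', hrel'⟩ := h'
  exact ⟨e.trans f, fun x y => (hle x y).trans (hle' (e x) (e y)),
    fun i x y => (hrel i x y).trans (hrel' i (e x) (e y))⟩

lemma iso_restrict_image {R S : OrdBin ι} (e : R.V ≃ S.V)
    (hle : ∀ x y : R.V, R.le x y ↔ S.le (e x) (e y))
    (hrel : ∀ (i : ι) (x y : R.V), R.rel i x y ↔ S.rel i (e x) (e y))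
    (A : Set R.V) : Iso (R.restrict A) (S.restrict (e '' A)) := by
  refine ⟨e.image A, fun x y => ?_, fun i x y => ?_⟩
  · exact hle x.1 y.1
  · exact hrel i x.1 y.1

lemma profileR_congr {R S : OrdBin ι} (h : Iso R S) (n : ℕ) :
    profileR R n = profileR S n := by
  obtain ⟨e, hle, hrel⟩ := h
  apply Nat.card_congr
  have himg : ∀ A : Set R.V, A.Finite → A.ncard = n →
      (e '' A).Finite ∧ (e '' A).ncard = n := fun A hA hn =>
    ⟨hA.image e, by rw [Set.ncard_image_of_injective _ e.injective]; exact hn⟩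
  have himg' : ∀ B : Set S.V, B.Finite → B.ncard = n →
      (e.symm '' B).Finite ∧ (e.symm '' B).ncard = n := fun B hB hn =>
    ⟨hB.image _, by rw [Set.ncard_image_of_injective _ e.symm.injective]; exact hn⟩
  refine
    { toFun := Quot.lift
        (fun A => Quot.mk _ (⟨e '' A.1, himg A.1 A.2.1 A.2.2⟩ :
          {B : Set S.V // B.Finite ∧ B.ncard = n}))
        (fun A B hAB => Quot.sound ?_)
      invFun := Quot.lift
        (fun B => Quot.mk _ (⟨e.symm '' B.1, himg' B.1 B.2.1 B.2.2⟩ :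
          {A : Set R.V // A.Finite ∧ A.ncard = n}))
        (fun A B hAB => Quot.sound ?_)
      left_inv := ?_
      right_inv := ?_ }
  · exact ((iso_restrict_image e hle hrel A.1).symm.trans hAB).trans
      (iso_restrict_image e hle hrel B.1)
  · have hleS : ∀ x y : S.V, S.le x y ↔ R.le (e.symm x) (e.symm y) := fun x y => by
      rw [hle (e.symm x) (e.symm y), e.apply_symm_apply, e.apply_symm_apply]
    have hrelS : ∀ (i : ι) (x y : S.V), S.rel i x y ↔ R.rel i (e.symm x) (e.symm y) :=
      fun i x y => by
        rw [hrel i (e.symm x) (e.symm y), e.apply_symm_apply, e.apply_symm_apply]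
    exact ((iso_restrict_image e.symm hleS hrelS A.1).symm.trans hAB).trans
      (iso_restrict_image e.symm hleS hrelS B.1)
  · intro q
    induction q using Quot.ind with
    | _ A => exact congrArg (Quot.mk _) (Subtype.ext (e.symm_image_image A.1))
  · intro q
    induction q using Quot.ind with
    | _ B => exact congrArg (Quot.mk _) (Subtype.ext (e.image_symm_image B.1))


end OrdBin

/-- Binary strings (as functions) supported on `[0, r-2]` with no two adjacent `true`s. -/
abbrev Str (r : ℕ) : Type :=
  {g : ℕ → Bool // (∀ k, g k = true → k + 2 ≤ r) ∧ ∀ k, ¬(g k = true ∧ g (k + 1) = true)}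

lemma Str.eq_false {r : ℕ} (g : Str r) {k : ℕ} (h : ¬ k + 2 ≤ r) : g.1 k = false := by
  cases hgk : g.1 k with
  | false => rfl
  | true => exact absurd (g.2.1 k hgk) h

instance Str.finite (r : ℕ) : Finite (Str r) := by
  apply Finite.of_injective (fun g : Str r => (fun i : Fin r => g.1 i : Fin r → Bool))
  intro g g' h
  apply Subtype.ext; funext k
  by_cases hk : k + 2 ≤ r
  · exact congrFun h ⟨k, by omega⟩
  · rw [Str.eq_false g hk, Str.eq_false g' hk]

def Str.trivial (r : ℕ) : Str r :=
  ⟨fun _ => false, fun k h => by simp at h, fun k h => by simp at h⟩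

lemma Str.subsingleton_small {r : ℕ} (hr : r ≤ 1) (g : Str r) : g = Str.trivial r := by
  apply Subtype.ext; funext k
  exact Str.eq_false g (by omega)

instance Str.unique0 : Unique (Str 0) where
  default := Str.trivial 0
  uniq g := Str.subsingleton_small (by omega) g

instance Str.unique1 : Unique (Str 1) where
  default := Str.trivial 1
  uniq g := Str.subsingleton_small (by omega) g

def Str.up (r : ℕ) (g : Str (r + 1)) : Str (r + 2) :=
  ⟨g.1, fun k h => by have := g.2.1 k h; omega, g.2.2⟩

def Str.ext2 (r : ℕ) (g : Str r) : Str (r + 2) :=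
  ⟨Function.update g.1 r true,
    by intro k h
       by_cases hk : k = r
       · omega
       · rw [Function.update_of_ne hk] at h; have := g.2.1 k h; omega,
    by intro k ⟨h1, h2⟩
       by_cases hk : k = r
       · subst hk
         rw [Function.update_of_ne (by omega)] at h2
         have := g.2.1 _ h2; omega
       · by_cases hk1 : k + 1 = r
         · rw [Function.update_of_ne hk] at h1
           have := g.2.1 _ h1; omega
         · rw [Function.update_of_ne hk] at h1
           rw [Function.update_of_ne hk1] at h2
           exact g.2.2 k ⟨h1, h2⟩⟩

lemma Str.sum_bij (r : ℕ) :
    Function.Bijective (Sum.elim (Str.up r) (Str.ext2 r)) := by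
  constructor
  · rintro (g | g) (g' | g') h <;>
      simp only [Sum.elim_inl, Sum.elim_inr, Str.up, Str.ext2, Subtype.mk.injEq] at h
    · exact congrArg Sum.inl (Subtype.ext h)
    · exfalso
      have := congrFun h r
      rw [Str.eq_false g (by omega), Function.update_self] at this
      exact Bool.noConfusion this
    · exfalso
      have := congrFun h r
      rw [Str.eq_false g' (by omega), Function.update_self] at this
      exact Bool.noConfusion this
    · refine congrArg Sum.inr (Subtype.ext (funext fun k => ?_))
      by_cases hk : k = r
      · subst hk
        rw [Str.eq_false g (by omega), Str.eq_false g' (by omega)]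
      · have := congrFun h k
        rwa [Function.update_of_ne hk, Function.update_of_ne hk] at this
  · rintro ⟨h, hsup, hadj⟩
    by_cases hr : h r = true
    · refine ⟨Sum.inr ⟨Function.update h r false, ?_, ?_⟩, ?_⟩
      · intro k hk
        by_cases hkr : k = r
        · subst hkr; rw [Function.update_self] at hk; exact Bool.noConfusion hk
        · rw [Function.update_of_ne hkr] at hk
          have h2 := hsup k hk
          have h3 : k + 1 ≠ r := fun he => hadj k ⟨hk, he ▸ hr⟩
          omega
      · intro k ⟨h1, h2⟩
        have g1 : h k = true := by
          by_cases hkr : k = r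
          · subst hkr; rw [Function.update_self] at h1; exact Bool.noConfusion h1
          · rwa [Function.update_of_ne hkr] at h1
        have g2 : h (k + 1) = true := by
          by_cases hkr : k + 1 = r
          · subst hkr; rw [Function.update_self] at h2; exact Bool.noConfusion h2
          · rwa [Function.update_of_ne hkr] at h2
        exact hadj k ⟨g1, g2⟩
      · apply Subtype.ext; funext k
        simp only [Sum.elim_inr, Str.ext2]
        by_cases hk : k = r
        · subst hk; rw [Function.update_self, hr]
        · rw [Function.update_of_ne hk, Function.update_of_ne hk]
    · refine ⟨Sum.inl ⟨h, ?_, hadj⟩, rfl⟩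
      intro k hk
      have h1 := hsup k hk
      have h2 : k ≠ r := fun he => hr (he ▸ hk)
      omega

theorem Str.card : ∀ r, Nat.card (Str r) = fib1 r
  | 0 => Nat.card_unique
  | 1 => Nat.card_unique
  | (r + 2) => by
      rw [← Nat.card_congr (Equiv.ofBijective _ (Str.sum_bij r)), Nat.card_sum,
        Str.card (r + 1), Str.card r, fib1]


/-- The `rel`ation of the `ℕ`-model of `2·Δ_ℕ`. -/
abbrev nsRel (a b : ℕ) : Prop := a = b ∨ (b = a + 1 ∧ Even a)

/-- The `ℕ`-model of `2·Δ_ℕ`. -/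
abbrev NS : OrdBin (Fin 1) where
  V := ℕ
  le := (· ≤ ·)
  linear := inferInstance
  rel := fun _ a b => nsRel a b

namespace NSfacts

variable {r : ℕ}

/-- The increasing enumeration of a finset of `ℕ`, as a function on all of `ℕ`. -/
noncomputable def eseq (s : Finset ℕ) (hs : s.card = r) : ℕ → ℕ := fun k =>
  if hk : k < r then s.orderEmbOfFin hs ⟨k, hk⟩ else 0

lemma eseq_eq (s : Finset ℕ) (hs : s.card = r) {k : ℕ} (hk : k < r) :
    eseq s hs k = s.orderEmbOfFin hs ⟨k, hk⟩ := dif_pos hk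

lemma eseq_mem (s : Finset ℕ) (hs : s.card = r) {k : ℕ} (hk : k < r) :
    eseq s hs k ∈ s := by
  rw [eseq_eq s hs hk]; exact Finset.orderEmbOfFin_mem s hs _

lemma eseq_lt (s : Finset ℕ) (hs : s.card = r) {k l : ℕ} (hk : k < r) (hl : l < r)
    (hkl : k < l) : eseq s hs k < eseq s hs l := by
  rw [eseq_eq s hs hk, eseq_eq s hs hl]
  exact (s.orderEmbOfFin hs).strictMono (by simpa [Fin.lt_def] using hkl)

/-- Characterisation of `nsRel` on consecutive enumerated elements. -/
lemma rel_succ_iff (s : Finset ℕ) (hs : s.card = r) {k : ℕ} (hk : k + 1 < r) :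
    nsRel (eseq s hs k) (eseq s hs (k + 1)) ↔
      (eseq s hs (k + 1) = eseq s hs k + 1 ∧ eseq s hs k % 2 = 0) := by
  have hlt := eseq_lt s hs (by omega) hk (Nat.lt_succ_self k)
  constructor
  · rintro (heq | ⟨h1, h2⟩)
    · omega
    · exact ⟨h1, Nat.even_iff.mp h2⟩
  · rintro ⟨h1, h2⟩
    exact Or.inr ⟨h1, Nat.even_iff.mpr h2⟩

/-- Characterisation of `nsRel` on arbitrary enumerated elements. -/
lemma rel_iff (s : Finset ℕ) (hs : s.card = r) {k l : ℕ} (hk : k < r) (hl : l < r) :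
    nsRel (eseq s hs k) (eseq s hs l) ↔
      k = l ∨ (l = k + 1 ∧ eseq s hs l = eseq s hs k + 1 ∧ eseq s hs k % 2 = 0) := by
  constructor
  · rintro (heq | ⟨h1, h2⟩)
    · left
      rcases Nat.lt_trichotomy k l with h | h | h
      · exact absurd heq (Nat.ne_of_lt (eseq_lt s hs hk hl h))
      · exact h
      · exact absurd heq.symm (Nat.ne_of_lt (eseq_lt s hs hl hk h))
    · right
      have hkl : k < l := by
        rcases Nat.lt_trichotomy k l with h | h | h
        · exact h
        · subst h; omega
        · have := eseq_lt s hs hl hk h; omega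
      have hlk : l = k + 1 := by
        by_contra hc
        have h2' : k + 1 < l := by omega
        have e1 := eseq_lt s hs hk (by omega : k + 1 < r) (Nat.lt_succ_self k)
        have e2 := eseq_lt s hs (by omega : k + 1 < r) hl h2'
        omega
      subst hlk
      exact ⟨rfl, h1, Nat.even_iff.mp h2⟩
  · rintro (rfl | ⟨rfl, h1, h2⟩)
    · exact Or.inl rfl
    · exact Or.inr ⟨h1, Nat.even_iff.mpr h2⟩

/-- The invariant: the sequence of booleans recording which consecutive pairs of the
increasing enumeration are `nsRel`-related. -/
noncomputable def invFun' (s : Finset ℕ) (hs : s.card = r) : ℕ → Bool := fun k =>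
  if hk : k + 1 < r then
    decide (eseq s hs (k + 1) = eseq s hs k + 1 ∧ eseq s hs k % 2 = 0)
  else false

lemma invFun'_true_iff (s : Finset ℕ) (hs : s.card = r) {k : ℕ} (hk : k + 1 < r) :
    invFun' s hs k = true ↔
      (eseq s hs (k + 1) = eseq s hs k + 1 ∧ eseq s hs k % 2 = 0) := by
  rw [invFun', dif_pos hk, decide_eq_true_iff]

lemma invFun'_false (s : Finset ℕ) (hs : s.card = r) {k : ℕ} (hk : ¬ k + 1 < r) :
    invFun' s hs k = false := dif_neg hk

/-- The invariant packaged as an element of `Str r`. -/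
noncomputable def invStr (s : Finset ℕ) (hs : s.card = r) : Str r := by
  refine ⟨invFun' s hs, fun k h => ?_, fun k h => ?_⟩
  · by_contra hc
    rw [invFun'_false s hs (by omega)] at h
    exact Bool.noConfusion h
  · obtain ⟨h1, h2⟩ := h
    by_cases hk2 : k + 2 < r
    · rw [invFun'_true_iff s hs (by omega)] at h1
      rw [invFun'_true_iff s hs (by omega)] at h2
      omega
    · rw [invFun'_false s hs (by omega)] at h2
      exact Bool.noConfusion h2

end NSfacts


namespace NSfacts

variable {r : ℕ}

lemma card_toFinset (A : Set ℕ) (hA : A.Finite) (hn : A.ncard = r) :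
    hA.toFinset.card = r := by
  rw [← Set.ncard_eq_toFinset_card A hA]; exact hn

lemma eseq_le_iff (s : Finset ℕ) (hs : s.card = r) {k l : ℕ} (hk : k < r) (hl : l < r) :
    eseq s hs k ≤ eseq s hs l ↔ k ≤ l := by
  rw [eseq_eq s hs hk, eseq_eq s hs hl, OrderEmbedding.le_iff_le]
  exact Fin.mk_le_mk

/-- The invariant is preserved by isomorphism of induced substructures. -/
lemma invStr_eq_of_iso {A B : Set ℕ} (hA : A.Finite) (hB : B.Finite)
    (hnA : A.ncard = r) (hnB : B.ncard = r)
    (h : OrdBin.Iso (NS.restrict A) (NS.restrict B)) :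
    invStr hA.toFinset (card_toFinset A hA hnA) =
      invStr hB.toFinset (card_toFinset B hB hnB) := by
  obtain ⟨e, hle, hrel⟩ := h
  set sA := hA.toFinset
  set sB := hB.toFinset
  set hsA := card_toFinset A hA hnA
  set hsB := card_toFinset B hB hnB
  have memA : ∀ i : Fin r, sA.orderEmbOfFin hsA i ∈ A := fun i => by
    rw [← Set.Finite.mem_toFinset hA]; exact Finset.orderEmbOfFin_mem sA hsA i
  set F : Fin r → ℕ := fun i => (e ⟨sA.orderEmbOfFin hsA i, memA i⟩).1 with hF
  have hFmono : StrictMono F := by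
    intro i j hij
    have hmA : sA.orderEmbOfFin hsA i < sA.orderEmbOfFin hsA j :=
      (sA.orderEmbOfFin hsA).strictMono hij
    apply lt_of_le_of_ne
    · exact (hle ⟨sA.orderEmbOfFin hsA i, memA i⟩ ⟨sA.orderEmbOfFin hsA j, memA j⟩).mp
        (le_of_lt hmA)
    · intro hFeq
      have h1 := e.injective (Subtype.ext hFeq)
      have h2 := congrArg Subtype.val h1
      exact absurd ((sA.orderEmbOfFin hsA).injective h2) (ne_of_lt hij)
  have hFmem : ∀ i, F i ∈ sB := fun i => by
    rw [Set.Finite.mem_toFinset hB]; exact (e ⟨sA.orderEmbOfFin hsA i, memA i⟩).2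
  have hFeq : F = ⇑(sB.orderEmbOfFin hsB) :=
    Finset.orderEmbOfFin_unique hsB hFmem hFmono
  apply Subtype.ext; funext k
  show invFun' sA hsA k = invFun' sB hsB k
  by_cases hk : k + 1 < r
  · have hk0 : k < r := by omega
    set xk : ↥A := ⟨sA.orderEmbOfFin hsA ⟨k, hk0⟩, memA ⟨k, hk0⟩⟩
    set xk1 : ↥A := ⟨sA.orderEmbOfFin hsA ⟨k + 1, hk⟩, memA ⟨k + 1, hk⟩⟩
    have eB0 : (e xk).1 = eseq sB hsB k := by
      rw [eseq_eq sB hsB hk0]; exact congrFun hFeq ⟨k, hk0⟩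
    have eB1 : (e xk1).1 = eseq sB hsB (k + 1) := by
      rw [eseq_eq sB hsB hk]; exact congrFun hFeq ⟨k + 1, hk⟩
    have hrelAB : nsRel (eseq sA hsA k) (eseq sA hsA (k + 1)) ↔
        nsRel (eseq sB hsB k) (eseq sB hsB (k + 1)) := by
      rw [eseq_eq sA hsA hk0, eseq_eq sA hsA hk, ← eB0, ← eB1]
      exact hrel 0 xk xk1
    rw [invFun', invFun', dif_pos hk, dif_pos hk]
    exact decide_eq_decide.mpr
      ((rel_succ_iff sA hsA hk).symm.trans (hrelAB.trans (rel_succ_iff sB hsB hk)))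
  · rw [invFun'_false sA hsA hk, invFun'_false sB hsB hk]

/-- Conversely, sets with the same invariant induce isomorphic substructures. -/
lemma iso_of_invStr_eq {A B : Set ℕ} (hA : A.Finite) (hB : B.Finite)
    (hnA : A.ncard = r) (hnB : B.ncard = r)
    (h : invStr hA.toFinset (card_toFinset A hA hnA) =
      invStr hB.toFinset (card_toFinset B hB hnB)) :
    OrdBin.Iso (NS.restrict A) (NS.restrict B) := by
  set sA := hA.toFinset
  set sB := hB.toFinset
  set hsA := card_toFinset A hA hnA
  set hsB := card_toFinset B hB hnB
  have hinv : invFun' sA hsA = invFun' sB hsB := congrArg Subtype.val h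
  set idxA : ↥A ≃ Fin r :=
    (Equiv.subtypeEquivRight (fun x => (Set.Finite.mem_toFinset hA).symm)).trans
      (sA.orderIsoOfFin hsA).toEquiv.symm with hidxA
  set idxB : ↥B ≃ Fin r :=
    (Equiv.subtypeEquivRight (fun x => (Set.Finite.mem_toFinset hB).symm)).trans
      (sB.orderIsoOfFin hsB).toEquiv.symm with hidxB
  set e : ↥A ≃ ↥B := idxA.trans idxB.symm with he
  have memB : ∀ (k : ℕ), k < r → eseq sB hsB k ∈ B := fun k hk => by
    rw [← Set.Finite.mem_toFinset hB]; exact eseq_mem sB hsB hk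
  have fact_idxA : ∀ (k : ℕ) (hk : k < r) (hmem : eseq sA hsA k ∈ A),
      idxA ⟨eseq sA hsA k, hmem⟩ = ⟨k, hk⟩ := by
    intro k hk hmem
    rw [hidxA, Equiv.trans_apply, Equiv.symm_apply_eq]
    apply Subtype.ext
    show eseq sA hsA k = ((sA.orderIsoOfFin hsA) ⟨k, hk⟩ : ℕ)
    rw [eseq_eq sA hsA hk]; rfl
  have fact_idxB : ∀ (k : ℕ) (hk : k < r) (hmem : eseq sB hsB k ∈ B),
      idxB ⟨eseq sB hsB k, hmem⟩ = ⟨k, hk⟩ := by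
    intro k hk hmem
    rw [hidxB, Equiv.trans_apply, Equiv.symm_apply_eq]
    apply Subtype.ext
    show eseq sB hsB k = ((sB.orderIsoOfFin hsB) ⟨k, hk⟩ : ℕ)
    rw [eseq_eq sB hsB hk]; rfl
  have fact2 : ∀ (k : ℕ) (hk : k < r) (hmem : eseq sA hsA k ∈ A),
      (e ⟨eseq sA hsA k, hmem⟩).1 = eseq sB hsB k := by
    intro k hk hmem
    have h1 : e ⟨eseq sA hsA k, hmem⟩ = idxB.symm ⟨k, hk⟩ := by
      rw [he, Equiv.trans_apply, fact_idxA k hk hmem]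
    have h2 : idxB.symm ⟨k, hk⟩ = ⟨eseq sB hsB k, memB k hk⟩ := by
      rw [Equiv.symm_apply_eq, fact_idxB k hk (memB k hk)]
    rw [h1, h2]
  have hsurjA : ∀ x : ↥A, ∃ k : ℕ, ∃ hk : k < r, x.1 = eseq sA hsA k := by
    intro x
    have hx : x.1 ∈ sA := (Set.Finite.mem_toFinset hA).mpr x.2
    have hx2 : x.1 ∈ Set.range (sA.orderEmbOfFin hsA) := by
      rw [Finset.range_orderEmbOfFin]; exact hx
    obtain ⟨i, hi⟩ := hx2
    refine ⟨i.1, i.2, ?_⟩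
    rw [eseq_eq sA hsA i.2]
    exact hi.symm
  refine ⟨e, ?_, ?_⟩
  · intro x y
    obtain ⟨k, hk, hx⟩ := hsurjA x
    obtain ⟨l, hl, hy⟩ := hsurjA y
    have hex : (e x).1 = eseq sB hsB k := by
      have : x = ⟨eseq sA hsA k, hx ▸ x.2⟩ := Subtype.ext hx
      rw [this]; exact fact2 k hk _
    have hey : (e y).1 = eseq sB hsB l := by
      have : y = ⟨eseq sA hsA l, hy ▸ y.2⟩ := Subtype.ext hy
      rw [this]; exact fact2 l hl _
    show x.1 ≤ y.1 ↔ (e x).1 ≤ (e y).1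
    rw [hx, hy, hex, hey, eseq_le_iff sA hsA hk hl, eseq_le_iff sB hsB hk hl]
  · intro i x y
    obtain ⟨k, hk, hx⟩ := hsurjA x
    obtain ⟨l, hl, hy⟩ := hsurjA y
    have hex : (e x).1 = eseq sB hsB k := by
      have : x = ⟨eseq sA hsA k, hx ▸ x.2⟩ := Subtype.ext hx
      rw [this]; exact fact2 k hk _
    have hey : (e y).1 = eseq sB hsB l := by
      have : y = ⟨eseq sA hsA l, hy ▸ y.2⟩ := Subtype.ext hy
      rw [this]; exact fact2 l hl _
    show nsRel x.1 y.1 ↔ nsRel (e x).1 (e y).1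
    rw [hx, hy, hex, hey, rel_iff sA hsA hk hl, rel_iff sB hsB hk hl]
    constructor
    · rintro (rfl | ⟨rfl, hP⟩)
      · exact Or.inl rfl
      · refine Or.inr ⟨rfl, ?_⟩
        rw [← invFun'_true_iff sB hsB hl, ← hinv, invFun'_true_iff sA hsA hl]
        exact hP
    · rintro (rfl | ⟨rfl, hP⟩)
      · exact Or.inl rfl
      · refine Or.inr ⟨rfl, ?_⟩
        rw [← invFun'_true_iff sA hsA hl, hinv, invFun'_true_iff sB hsB hl]
        exact hP

end NSfacts


namespace NSfacts

variable {r : ℕ}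

/-- The canonical increasing sequence realising a given boolean string. -/
def can (g : ℕ → Bool) : ℕ → ℕ
  | 0 => 0
  | k + 1 => if g k then can g k + 1 else 2 * (can g k / 2 + 1)

lemma can_lt (g : ℕ → Bool) (k : ℕ) : can g k < can g (k + 1) := by
  show can g k < if g k then can g k + 1 else 2 * (can g k / 2 + 1)
  cases hgk : g k with
  | true => simp
  | false => simp only [Bool.false_eq_true, if_false]; omega

lemma can_strictMono (g : ℕ → Bool) : StrictMono (can g) :=
  strictMono_nat_of_lt_succ (can_lt g)

lemma can_even (g : ℕ → Bool) (hadj : ∀ k, ¬(g k = true ∧ g (k + 1) = true))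
    (k : ℕ) (h : g k = true) : can g k % 2 = 0 := by
  cases k with
  | zero => rfl
  | succ k =>
      have hgk : g k = false := by
        cases hgk : g k with
        | false => rfl
        | true => exact absurd ⟨hgk, h⟩ (hadj k)
      show (if g k then can g k + 1 else 2 * (can g k / 2 + 1)) % 2 = 0
      rw [hgk]
      simp only [Bool.false_eq_true, if_false]
      omega

lemma can_rel (g : ℕ → Bool) (hadj : ∀ k, ¬(g k = true ∧ g (k + 1) = true)) (k : ℕ) :
    (can g (k + 1) = can g k + 1 ∧ can g k % 2 = 0) ↔ g k = true := by
  cases hgk : g k with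
  | true =>
      simp only [iff_true]
      refine ⟨?_, can_even g hadj k hgk⟩
      show (if g k then can g k + 1 else 2 * (can g k / 2 + 1)) = can g k + 1
      rw [hgk]; simp
  | false =>
      simp only [Bool.false_eq_true, iff_false]
      have hstep : can g (k + 1) = 2 * (can g k / 2 + 1) := by
        show (if g k then can g k + 1 else 2 * (can g k / 2 + 1)) = _
        rw [hgk]; simp
      rw [hstep]
      omega

/-- The canonical set realising a given boolean string. -/
def canSet (g : ℕ → Bool) (r : ℕ) : Set ℕ := can g '' Set.Iio r

lemma canSet_finite (g : ℕ → Bool) (r : ℕ) : (canSet g r).Finite :=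
  (Set.finite_Iio r).image _

lemma canSet_ncard (g : ℕ → Bool) (r : ℕ) : (canSet g r).ncard = r := by
  rw [canSet, Set.ncard_image_of_injective _ (can_strictMono g).injective,
    ← Finset.coe_Iio, Set.ncard_coe_finset, Nat.card_Iio]

lemma invStr_canSet (g : Str r) :
    invStr (canSet_finite g.1 r).toFinset
      (card_toFinset (canSet g.1 r) (canSet_finite g.1 r) (canSet_ncard g.1 r)) = g := by
  set s := (canSet_finite g.1 r).toFinset
  set hs := card_toFinset (canSet g.1 r) (canSet_finite g.1 r) (canSet_ncard g.1 r)
  have hu : (fun i : Fin r => can g.1 i) = ⇑(s.orderEmbOfFin hs) := by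
    apply Finset.orderEmbOfFin_unique
    · intro i
      rw [Set.Finite.mem_toFinset]
      exact ⟨i.1, i.2, rfl⟩
    · intro i j hij
      exact can_strictMono g.1 hij
  have heseq : ∀ (k : ℕ), k < r → eseq s hs k = can g.1 k := by
    intro k hk
    rw [eseq_eq s hs hk]
    exact (congrFun hu ⟨k, hk⟩).symm
  apply Subtype.ext; funext k
  show invFun' s hs k = g.1 k
  by_cases hk : k + 1 < r
  · rw [invFun', dif_pos hk, heseq (k + 1) hk, heseq k (by omega)]
    cases hgk : g.1 k with
    | true => exact decide_eq_true ((can_rel g.1 g.2.2 k).mpr hgk)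
    | false =>
        apply decide_eq_false
        intro hP
        rw [(can_rel g.1 g.2.2 k).mp hP] at hgk
        exact Bool.noConfusion hgk
  · rw [invFun'_false s hs hk]
    exact (Str.eq_false g (by omega)).symm

/-- The profile of the `ℕ`-model is the Fibonacci sequence. -/
lemma profileR_NS (r : ℕ) : OrdBin.profileR NS r = fib1 r := by
  rw [← Str.card r]
  refine Nat.card_eq_of_bijective
    (Quot.lift
      (fun A : {A : Set NS.V // A.Finite ∧ A.ncard = r} =>
        invStr A.2.1.toFinset (card_toFinset A.1 A.2.1 A.2.2))
      (fun A B hAB => invStr_eq_of_iso A.2.1 B.2.1 A.2.2 B.2.2 hAB)) ⟨?_, ?_⟩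
  · intro q q'
    induction q using Quot.ind with
    | _ A =>
      induction q' using Quot.ind with
      | _ B =>
        intro hL
        exact Quot.sound (iso_of_invStr_eq A.2.1 B.2.1 A.2.2 B.2.2 hL)
  · intro g
    exact ⟨Quot.mk _ ⟨canSet g.1 r, canSet_finite g.1 r, canSet_ncard g.1 r⟩,
      invStr_canSet g⟩

end NSfacts

/-- The order- and relation-preserving bijection `ℕ × Fin 2 ≃ ℕ`. -/
def twoNatEquiv : ℕ × Fin 2 ≃ ℕ where
  toFun p := 2 * p.1 + (p.2 : ℕ)
  invFun n := (n / 2, ⟨n % 2, by omega⟩)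
  left_inv := by
    rintro ⟨a, ⟨i, hi⟩⟩
    have h1 : (2 * a + i) / 2 = a := by omega
    have h2 : (2 * a + i) % 2 = i := by omega
    show ((2 * a + i) / 2, (⟨(2 * a + i) % 2, by omega⟩ : Fin 2)) = (a, ⟨i, hi⟩)
    simp only [Prod.mk.injEq]
    exact ⟨h1, Fin.ext h2⟩
  right_inv := fun n => by show 2 * (n / 2) + n % 2 = n; omega

lemma iso_twoDot_NS : OrdBin.Iso twoDotAntichain NS := by
  refine ⟨twoNatEquiv, ?_, ?_⟩
  · rintro ⟨a, ⟨i, hi⟩⟩ ⟨b, ⟨j, hj⟩⟩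
    show (a < b ∨ (a = b ∧ (⟨i, hi⟩ : Fin 2) ≤ ⟨j, hj⟩)) ↔ 2 * a + i ≤ 2 * b + j
    simp only [Fin.mk_le_mk]
    omega
  · rintro idx ⟨a, ⟨i, hi⟩⟩ ⟨b, ⟨j, hj⟩⟩
    show (a = b ∧ (⟨i, hi⟩ : Fin 2) ≤ ⟨j, hj⟩) ↔ nsRel (2 * a + i) (2 * b + j)
    simp only [Fin.mk_le_mk]
    rw [nsRel, Nat.even_iff]
    omega


/-- The profile of the ordered reflexive directed graph `2·Δ_ℕ` satisfies
`φ(0) = φ(1) = 1` and `φ(r) = φ(r-1) + φ(r-2)` for `r ≥ 2`; in particular it grows as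
the Fibonacci sequence. -/
theorem profile_of_twoDotAntichain :
    OrdBin.profileR twoDotAntichain 0 = 1 ∧
    OrdBin.profileR twoDotAntichain 1 = 1 ∧
    (∀ r : ℕ, OrdBin.profileR twoDotAntichain (r + 2) =
        OrdBin.profileR twoDotAntichain (r + 1) + OrdBin.profileR twoDotAntichain r) ∧
    (∀ r : ℕ, OrdBin.profileR twoDotAntichain r = fib1 r) := by
  have key : ∀ r, OrdBin.profileR twoDotAntichain r = fib1 r := fun r => by
    rw [OrdBin.profileR_congr iso_twoDot_NS r, NSfacts.profileR_NS]
  exact ⟨key 0, key 1, fun r => by rw [key, key, key, fib1], key⟩
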